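/- Let z₀ ∈ ℂ with Im z₀ ≠ 0 and let P be a polynomial with real coefficients. Then for every 0 ≤ k ≤ g and every real λ in the open band (E_{2k}, E_{2k+1}), the complex number [ (R^{1/2}(λ) + R^{1/2}(z₀)) / (2(λ − z₀)) − (R^{1/2}(λ) − conj(R^{1/2}(z₀))) / (2(λ − conj z₀)) + P(λ) ] / R^{1/2}(λ) has real part zero, where R^{1/2}(λ) denotes the boundary value of R^{1/2} from the upper half plane (which equals the value of the defining formula at λ). (This is the computation showing that the Abelian differential of the third kind ω_{p₀ p̃₀}, with poles at p₀ = (z₀, +) and p̃₀ = (conj z₀, −), is purely imaginary on the boundary of the upper sheet, whence the Green function g(z, z₀) = −Re ∫_{E_0}^{p} ω_{p₀ p̃₀} vanishes on ∂Π₊.) -/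

import Mathlib

open Complex Filter Set

lemma cpow_half_pos' {x : ℝ} (hx : 0 < x) : (x:ℂ) ^ ((1:ℂ)/2) = (Real.sqrt x : ℂ) := by
  rw [show ((1:ℂ)/2) = (((1:ℝ)/2 : ℝ) : ℂ) by norm_num, ← Complex.ofReal_cpow hx.le,
    ← Real.sqrt_eq_rpow]

lemma cpow_half_neg' {x : ℝ} (hx : x < 0) :
    (x:ℂ) ^ ((1:ℂ)/2) = (Real.sqrt (-x) : ℂ) * Complex.I := by
  rw [Complex.ofReal_cpow_of_nonpos hx.le]
  have h1 : ((-x : ℝ):ℂ) ^ ((1:ℂ)/2) = (Real.sqrt (-x) : ℂ) := cpow_half_pos' (by linarith)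
  have h2 : Complex.exp (↑Real.pi * Complex.I * ((1:ℂ)/2)) = Complex.I := by
    rw [show (↑Real.pi * Complex.I * ((1:ℂ)/2)) = ((Real.pi/2 : ℝ):ℂ) * Complex.I by
      push_cast; ring, Complex.exp_mul_I]
    simp [Complex.cos_ofReal_re, ← Complex.ofReal_cos, ← Complex.ofReal_sin]
  push_cast at h1 ⊢
  rw [h1, h2]

/-- The fixed branch `R^{1/2}(z) = -∏_{j=0}^{2g+1} √(z - E_j)`, where `√` is the
principal branch of the complex square root (realized as `w ^ (1/2 : ℂ)`). -/
noncomputable def Rhalf (g : ℕ) (E : ℕ → ℝ) (z : ℂ) : ℂ :=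
  -∏ j ∈ Finset.range (2 * g + 2), (z - (E j : ℂ)) ^ ((1 : ℂ) / 2)

lemma Rhalf_band_re (g : ℕ) (E : ℕ → ℝ)
    (hE : ∀ i j : ℕ, i < j → j ≤ 2 * g + 1 → E i < E j)
    (k : ℕ) (hk : k ≤ g) (lam : ℝ)
    (h1 : E (2 * k) < lam) (h2 : lam < E (2 * k + 1)) :
    (Rhalf g E (lam : ℂ)).re = 0 := by
  have hsplit : (∏ j ∈ Finset.range (2 * g + 2), ((lam : ℂ) - (E j : ℂ)) ^ ((1 : ℂ) / 2)) =
      (∏ j ∈ Finset.range (2 * k + 1), ((lam : ℂ) - (E j : ℂ)) ^ ((1 : ℂ) / 2)) *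
      (∏ j ∈ Finset.Ico (2 * k + 1) (2 * g + 2), ((lam : ℂ) - (E j : ℂ)) ^ ((1 : ℂ) / 2)) := by
    rw [Finset.range_eq_Ico,
      ← Finset.prod_Ico_consecutive _ (Nat.zero_le (2*k+1)) (show 2*k+1 ≤ 2*g+2 by omega), Finset.range_eq_Ico]
  have hpos : ∀ j ∈ Finset.range (2 * k + 1),
      ((lam : ℂ) - (E j : ℂ)) ^ ((1 : ℂ) / 2) = ((Real.sqrt (lam - E j) : ℝ) : ℂ) := by
    intro j hj
    rw [Finset.mem_range] at hj
    have hlt : E j < lam := by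
      rcases eq_or_lt_of_le (Nat.lt_succ_iff.mp hj) with h | h
      · rwa [h]
      · exact lt_trans (hE j (2*k) h (by omega)) h1
    rw [show (lam : ℂ) - (E j : ℂ) = (((lam - E j : ℝ)) : ℂ) by push_cast; ring]
    exact cpow_half_pos' (by linarith)
  have hneg : ∀ j ∈ Finset.Ico (2 * k + 1) (2 * g + 2),
      ((lam : ℂ) - (E j : ℂ)) ^ ((1 : ℂ) / 2) =
        ((Real.sqrt (E j - lam) : ℝ) : ℂ) * Complex.I := by
    intro j hj
    rw [Finset.mem_Ico] at hj
    have hlt : lam < E j := by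
      rcases eq_or_lt_of_le hj.1 with h | h
      · rwa [← h]
      · exact lt_trans h2 (hE (2*k+1) j h (by omega))
    rw [show (lam : ℂ) - (E j : ℂ) = (((lam - E j : ℝ)) : ℂ) by push_cast; ring]
    rw [cpow_half_neg' (by linarith)]
    norm_num
  have hcard : (Finset.Ico (2 * k + 1) (2 * g + 2)).card = 2 * (g - k) + 1 := by
    rw [Nat.card_Ico]; omega
  have hIpow : Complex.I ^ (2 * (g - k) + 1) = ((-1 : ℝ) ^ (g - k) : ℂ) * Complex.I := by
    rw [pow_succ, pow_mul, Complex.I_sq]; push_cast; ring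
  unfold Rhalf
  rw [hsplit, Finset.prod_congr rfl hpos, Finset.prod_congr rfl hneg,
    Finset.prod_mul_distrib, Finset.prod_const, hcard, hIpow]
  rw [← Complex.ofReal_prod, ← Complex.ofReal_prod]
  set t := ∏ j ∈ Finset.range (2 * k + 1), Real.sqrt (lam - E j)
  set s := ∏ j ∈ Finset.Ico (2 * k + 1) (2 * g + 2), Real.sqrt (E j - lam)
  simp only [← Complex.ofReal_pow, Complex.neg_re, Complex.mul_re, Complex.mul_im,
    Complex.ofReal_re, Complex.ofReal_im, Complex.I_re, Complex.I_im]
  ring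

/-- for `z₀` off the real axis and a real polynomial `P`, the coefficient
`[(R^{1/2}(λ)+R^{1/2}(z₀))/(2(λ-z₀)) - (R^{1/2}(λ)-conj(R^{1/2}(z₀)))/(2(λ-conj z₀)) + P(λ)]
/ R^{1/2}(λ)` of the Abelian differential `ω_{p₀ p̃₀}` is purely imaginary at every
interior band point `λ ∈ (E_{2k}, E_{2k+1})` (with `R^{1/2}(λ)` the boundary value from
above, which equals the value of the defining formula at `λ`). -/
theorem green_function_boundary_purely_imaginary (g : ℕ) (hg : 1 ≤ g) (E : ℕ → ℝ)
    (hE : ∀ i j : ℕ, i < j → j ≤ 2 * g + 1 → E i < E j)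
    (z₀ : ℂ) (hz₀ : z₀.im ≠ 0) (P : Polynomial ℝ)
    (k : ℕ) (hk : k ≤ g) (lam : ℝ)
    (h1 : E (2 * k) < lam) (h2 : lam < E (2 * k + 1)) :
    (((Rhalf g E (lam : ℂ) + Rhalf g E z₀) / (2 * ((lam : ℂ) - z₀)) -
        (Rhalf g E (lam : ℂ) - (starRingEnd ℂ) (Rhalf g E z₀)) /
          (2 * ((lam : ℂ) - (starRingEnd ℂ) z₀)) +
        ((P.eval lam : ℝ) : ℂ)) / Rhalf g E (lam : ℂ)).re = 0 := by
  have hA : (Rhalf g E (lam : ℂ)).re = 0 := Rhalf_band_re g E hE k hk lam h1 h2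
  set A := Rhalf g E (lam : ℂ) with hAdef
  set B := Rhalf g E z₀ with hBdef
  have hconjA : (starRingEnd ℂ) A = -A := by
    rw [Complex.ext_iff]
    simp [hA]
  set X := (A + B) / (2 * ((lam : ℂ) - z₀)) -
      (A - (starRingEnd ℂ) B) / (2 * ((lam : ℂ) - (starRingEnd ℂ) z₀)) +
      ((P.eval lam : ℝ) : ℂ) with hXdef
  have hXim : X.im = 0 := by
    rw [← Complex.conj_eq_iff_im, hXdef]
    simp only [map_add, map_sub, map_div₀, map_mul, Complex.conj_conj,
      Complex.conj_ofReal, hconjA, map_ofNat]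
    ring
  rw [Complex.div_re, hXim, hA]
  simp
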